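/- arXiv:2509.09429 — 2 statements merged into one kernel-verified Lean document; each statement's English description precedes it below -/
import Mathlib

section
/- Let α > 0 and suppose Z is a stationary (KKT) point with multipliers μ_{ij}. Then for every i ∈ {1,…,N}: Σ_{j≠i} (ŵ_{ij}/(4α) − r²)² − Σ_{j≠i} (z_iᵀz_j − ŵ_{ij}/(4α))² = N r⁴ (1 − 1/d) + (1/(2α)) Σ_{j≠i} μ_{ij} (r² − z_iᵀz_j). In particular, since μ_{ij} ≥ 0 and z_iᵀz_j ≤ r² for all j, the left-hand side is at least N r⁴ (1 − 1/d). -/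
open Finset
open scoped BigOperators RealInnerProductSpace

/-- The set of indices whose label is `k`. -/
def classSet {N K : ℕ} (y : Fin N → Fin K) (k : Fin K) : Finset (Fin N) :=
  Finset.univ.filter (fun j => y j = k)

/-- `T₂(i)`: the indices `j` with `ŵ i j = 1`. -/
def T2 {N : ℕ} (w : Fin N → Fin N → Bool) (i : Fin N) : Finset (Fin N) :=
  Finset.univ.filter (fun j => w i j = true)

/-- `T₁(i)`: the indices `j` in the class of `i` with `ŵ i j = 0`. -/
def T1 {N K : ℕ} (y : Fin N → Fin K) (w : Fin N → Fin N → Bool) (i : Fin N) :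
    Finset (Fin N) :=
  Finset.univ.filter (fun j => y j = y i ∧ w i j = false)

/-- `ŵ` as a real-valued (0/1) matrix entry. -/
def wR {N : ℕ} (w : Fin N → Fin N → Bool) (i j : Fin N) : ℝ := if w i j then 1 else 0

/-- The `d × N` matrix whose columns are the representations `z i`. -/
def Zmat {N d : ℕ} (z : Fin N → EuclideanSpace ℝ (Fin d)) : Matrix (Fin d) (Fin N) ℝ :=
  Matrix.of fun a i => z i a

/-- The graph Laplacian of the adjacency `a i j = ŵ i j + μ i j`. -/
noncomputable def Lmat {N : ℕ} (w : Fin N → Fin N → Bool) (μ : Fin N → Fin N → ℝ) :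
    Matrix (Fin N) (Fin N) ℝ :=
  Matrix.of fun i j =>
    if i = j then ∑ k ∈ Finset.univ.erase i, (wR w i k + μ i k) else -(wR w i j + μ i j)

/-- The feature correlation matrix `C = (1/N) ∑ i, z i (z i)ᵀ`. -/
noncomputable def Cmat {N d : ℕ} (z : Fin N → EuclideanSpace ℝ (Fin d)) :
    Matrix (Fin d) (Fin d) ℝ :=
  ((N : ℝ))⁻¹ • ∑ i, Matrix.of (fun a b => z i a * z i b)

/-- Stationarity (KKT) equation `Z L + 2 α N (C − (r²/d) I_d) Z = 0`
for the multipliers `μ`. -/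
def IsKKT {N d : ℕ} (z : Fin N → EuclideanSpace ℝ (Fin d)) (w : Fin N → Fin N → Bool)
    (μ : Fin N → Fin N → ℝ) (α r : ℝ) : Prop :=
  Zmat z * Lmat w μ + (2 * α * (N : ℝ)) •
    ((Cmat z - (r ^ 2 / (d : ℝ)) • (1 : Matrix (Fin d) (Fin d) ℝ)) * Zmat z) = 0

/-!
Multiplying the stationarity equation on the left by `Zᵀ` turns it into an equation between
Gram matrices, `G L + 2α G² = 2αN (r²/d) G` with `G i j = ⟪z i, z j⟫`. Since `L` is the
Laplacian of the symmetric weights `a = ŵ + μ` and `G i i = r²`, its `i`-th diagonal entry reads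
`∑_{j ≠ i} a i j (r² - G i j) + 2α (r⁴ + ∑_{j ≠ i} (G i j)²) = 2αN r⁴/d`; completing the square
in each term gives the identity. The inequality follows since `μ ≥ 0` and `G i j ≤ r²`.
-/

open Matrix

variable {N d : ℕ}

lemma transpose_Zmat_mul_Zmat (z : Fin N → EuclideanSpace ℝ (Fin d)) :
    (Zmat z)ᵀ * Zmat z = gram ℝ z := by
  ext i j
  simp [Zmat, Matrix.mul_apply, PiLp.inner_apply, mul_comm]

lemma Cmat_eq_smul_Zmat_mul_transpose (z : Fin N → EuclideanSpace ℝ (Fin d)) :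
    Cmat z = (N : ℝ)⁻¹ • (Zmat z * (Zmat z)ᵀ) := by
  ext a b
  simp [Cmat, Zmat, Matrix.mul_apply, Matrix.sum_apply]

lemma mul_Lmat_apply_self {w : Fin N → Fin N → Bool} {μ : Fin N → Fin N → ℝ}
    (hsym : ∀ i j, w i j = w j i) (hμsym : ∀ i j, μ i j = μ j i)
    (G : Matrix (Fin N) (Fin N) ℝ) (i : Fin N) :
    (G * Lmat w μ) i i = ∑ j ∈ univ.erase i, (wR w i j + μ i j) * (G i i - G i j) := by
  rw [Matrix.mul_apply, ← add_sum_erase _ _ (mem_univ i)]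
  simp only [Lmat, of_apply, if_true, mul_sub, sum_sub_distrib]
  rw [sub_eq_add_neg, ← sum_neg_distrib, ← sum_mul, mul_comm]
  congr 1
  refine sum_congr rfl fun j hj => ?_
  rw [if_neg (ne_of_mem_erase hj), wR, wR, hsym j i, hμsym j i]
  ring

lemma IsKKT.gram_eq [NeZero N] {z : Fin N → EuclideanSpace ℝ (Fin d)}
    {w : Fin N → Fin N → Bool} {μ : Fin N → Fin N → ℝ} {α r : ℝ} (h : IsKKT z w μ α r) :
    gram ℝ z * Lmat w μ + (2 * α) • (gram ℝ z * gram ℝ z) =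
      (2 * α * N * (r ^ 2 / d)) • gram ℝ z := by
  have h' := congrArg ((Zmat z)ᵀ * ·) h
  simp only [Cmat_eq_smul_Zmat_mul_transpose, Matrix.mul_add, Matrix.mul_smul, Matrix.mul_zero,
    Matrix.sub_mul, Matrix.mul_sub, Matrix.smul_mul, Matrix.mul_smul, Matrix.mul_one,
    ← Matrix.mul_assoc, transpose_Zmat_mul_Zmat] at h'
  simp only [Matrix.mul_assoc, transpose_Zmat_mul_Zmat] at h'
  have hN : 2 * α * N * (N : ℝ)⁻¹ = 2 * α :=
    mul_inv_cancel_right₀ (Nat.cast_ne_zero.2 (NeZero.ne N)) _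
  rw [smul_sub, smul_smul, smul_smul, hN] at h'
  rw [← sub_eq_zero, ← h']
  module

lemma IsKKT.gram_eq_apply_self {z : Fin N → EuclideanSpace ℝ (Fin d)}
    {w : Fin N → Fin N → Bool} {μ : Fin N → Fin N → ℝ} {α r : ℝ} (h : IsKKT z w μ α r)
    (hz : ∀ i, ‖z i‖ = r) (hsym : ∀ i j, w i j = w j i) (hμsym : ∀ i j, μ i j = μ j i)
    (i : Fin N) :
    ∑ j ∈ univ.erase i, (wR w i j + μ i j) * (r ^ 2 - ⟪z i, z j⟫) +
        2 * α * (r ^ 4 + ∑ j ∈ univ.erase i, ⟪z i, z j⟫ ^ 2) =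
      2 * α * N * r ^ 4 / d := by
  have : NeZero N := NeZero.of_pos i.pos
  have hii : ⟪z i, z i⟫ = r ^ 2 := by rw [real_inner_self_eq_norm_sq, hz]
  have h_ii := congrFun (congrFun h.gram_eq i) i
  rw [Matrix.add_apply, mul_Lmat_apply_self hsym hμsym, Matrix.smul_apply, Matrix.smul_apply,
    Matrix.mul_apply, ← add_sum_erase _ _ (mem_univ i)] at h_ii
  simp only [gram_apply, hii, real_inner_comm (z i), smul_eq_mul, ← pow_two] at h_ii
  linear_combination h_ii

theorem stmt_3_general
    (N d : ℕ)
    (r : ℝ)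
    (z : Fin N → EuclideanSpace ℝ (Fin d)) (hz : ∀ i, ‖z i‖ = r)
    (w : Fin N → Fin N → Bool)
    (hsym : ∀ i j, w i j = w j i)
    (α : ℝ) (hα : 0 < α)
    (μ : Fin N → Fin N → ℝ)
    (hμsym : ∀ i j, μ i j = μ j i)
    (hμpos : ∀ i j, i ≠ j → 0 ≤ μ i j)
    (hstat : IsKKT z w μ α r) :
    ∀ i : Fin N,
      ((∑ j ∈ Finset.univ.erase i, (wR w i j / (4 * α) - r ^ 2) ^ 2) -
          (∑ j ∈ Finset.univ.erase i, (⟪z i, z j⟫ - wR w i j / (4 * α)) ^ 2)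
        = (N : ℝ) * r ^ 4 * (1 - 1 / (d : ℝ)) +
            (1 / (2 * α)) * ∑ j ∈ Finset.univ.erase i, μ i j * (r ^ 2 - ⟪z i, z j⟫)) ∧
      ((∑ j ∈ Finset.univ.erase i, (wR w i j / (4 * α) - r ^ 2) ^ 2) -
          (∑ j ∈ Finset.univ.erase i, (⟪z i, z j⟫ - wR w i j / (4 * α)) ^ 2)
        ≥ (N : ℝ) * r ^ 4 * (1 - 1 / (d : ℝ))) := by
  intro i
  have key := hstat.gram_eq_apply_self hz hsym hμsym i
  have hcard : (#(univ.erase i) : ℝ) = N - 1 := by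
    rw [card_erase_of_mem (mem_univ i), card_univ, Fintype.card_fin, Nat.cast_pred i.pos]
  have hterm (a b : ℝ) : (a / (4 * α) - r ^ 2) ^ 2 - (b - a / (4 * α)) ^ 2 =
      r ^ 4 - b ^ 2 - 1 / (2 * α) * (a * (r ^ 2 - b)) := by ring
  have heq : (∑ j ∈ univ.erase i, (wR w i j / (4 * α) - r ^ 2) ^ 2) -
        (∑ j ∈ univ.erase i, (⟪z i, z j⟫ - wR w i j / (4 * α)) ^ 2)
      = N * r ^ 4 * (1 - 1 / d) +
          1 / (2 * α) * ∑ j ∈ univ.erase i, μ i j * (r ^ 2 - ⟪z i, z j⟫) := by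
    rw [← sum_sub_distrib, sum_congr rfl fun j _ => hterm _ _, sum_sub_distrib, sum_sub_distrib,
      sum_const, nsmul_eq_mul, hcard, ← mul_sum]
    simp only [add_mul, sum_add_distrib] at key
    field_simp
    linear_combination -key
  have hμterm : 0 ≤ ∑ j ∈ univ.erase i, μ i j * (r ^ 2 - ⟪z i, z j⟫) := by
    refine sum_nonneg fun j hj => mul_nonneg (hμpos i j (ne_of_mem_erase hj).symm) ?_
    have := real_inner_le_norm (z i) (z j)
    rw [hz, hz] at this
    linarith
  refine ⟨heq, ?_⟩
  rw [heq]
  exact le_add_of_nonneg_right (mul_nonneg (by positivity) hμterm)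

theorem stmt_3
    (N d K : ℕ) (hN : 1 ≤ N) (hd : 1 ≤ d) (hK : 1 ≤ K)
    (r : ℝ) (hr : 0 < r)
    (z : Fin N → EuclideanSpace ℝ (Fin d)) (hz : ∀ i, ‖z i‖ = r)
    (y : Fin N → Fin K)
    (hD : ∀ k, (classSet y k).Nonempty)
    (w : Fin N → Fin N → Bool)
    (hsym : ∀ i j, w i j = w j i)
    (hdiag : ∀ i, w i i = true)
    (hcls : ∀ i j, w i j = true → y i = y j)
    (α : ℝ) (hα : 0 < α)
    (μ : Fin N → Fin N → ℝ)
    (hμsym : ∀ i j, μ i j = μ j i) (hμdiag : ∀ i, μ i i = 0)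
    (hμpos : ∀ i j, i ≠ j → 0 ≤ μ i j)
    (hstat : IsKKT z w μ α r) :
    ∀ i : Fin N,
      ((∑ j ∈ Finset.univ.erase i, (wR w i j / (4 * α) - r ^ 2) ^ 2) -
          (∑ j ∈ Finset.univ.erase i, (⟪z i, z j⟫ - wR w i j / (4 * α)) ^ 2)
        = (N : ℝ) * r ^ 4 * (1 - 1 / (d : ℝ)) +
            (1 / (2 * α)) * ∑ j ∈ Finset.univ.erase i, μ i j * (r ^ 2 - ⟪z i, z j⟫)) ∧
      ((∑ j ∈ Finset.univ.erase i, (wR w i j / (4 * α) - r ^ 2) ^ 2) -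
          (∑ j ∈ Finset.univ.erase i, (⟪z i, z j⟫ - wR w i j / (4 * α)) ^ 2)
        ≥ (N : ℝ) * r ^ 4 * (1 - 1 / (d : ℝ))) :=
  stmt_3_general N d r z hz w hsym α hα μ hμsym hμpos hstat
end

section
/- Fix i ∈ {1,…,N} with T₂(i) nonempty, and let δ_T ∈ [0, r²]. Let σ = P_{(j,l)∈T₂(i)×T₂(i)}[z_jᵀz_l ≤ δ_T]. Then E_{(j,l)∈T₂(i)×T₂(i)}[z_jᵀz_l] ≥ δ_T − √(5 σ (r² + δ_T) r²). -/
open Finset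
open scoped BigOperators RealInnerProductSpace

/-- Uniform average of `f` over `S × T`. -/
noncomputable def avg2 {N : ℕ} (S T : Finset (Fin N)) (f : Fin N → Fin N → ℝ) : ℝ :=
  (∑ j ∈ S, ∑ l ∈ T, f j l) / ((S.card : ℝ) * (T.card : ℝ))

open scoped Classical in
/-- The fraction of pairs of `S × T` satisfying `p`. -/
noncomputable def frac2 {N : ℕ} (S T : Finset (Fin N)) (p : Fin N → Fin N → Prop) : ℝ :=
  (((S ×ˢ T).filter (fun q => p q.1 q.2)).card : ℝ) / ((S.card : ℝ) * (T.card : ℝ))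

/-! Pairs with `⟪z j, z l⟫ > δ_T` contribute more than `δ_T` to the average and the remaining
fraction `σ` contributes at least `-r²` (Cauchy–Schwarz), so the average is at least
`δ_T - σ (r² + δ_T)`. Since `σ ≤ 1` and `δ_T ≤ r²`, `t = σ (r² + δ_T) ≤ 5 r²`, whence
`t ≤ √(t · 5 r²)`. -/

lemma Finset.card_mul_sub_card_filter_mul_le_sum {α : Type*} (s : Finset α) (f : α → ℝ)
    {δ m : ℝ} (hm : ∀ x ∈ s, m ≤ f x) :
    (#s : ℝ) * δ - #{x ∈ s | f x ≤ δ} * (δ - m) ≤ ∑ x ∈ s, f x := by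
  have hpointwise : ∀ x ∈ s, δ - (if f x ≤ δ then δ - m else 0) ≤ f x := by
    intro x hx
    split_ifs with h
    · linarith [hm x hx]
    · linarith
  calc (#s : ℝ) * δ - #{x ∈ s | f x ≤ δ} * (δ - m)
      = ∑ x ∈ s, (δ - if f x ≤ δ then δ - m else 0) := by
        rw [sum_sub_distrib, sum_ite, sum_const, sum_const, sum_const_zero, nsmul_eq_mul,
          nsmul_eq_mul, add_zero, mul_comm]
    _ ≤ ∑ x ∈ s, f x := sum_le_sum hpointwise

lemma frac2_nonneg {N : ℕ} (S T : Finset (Fin N)) (p : Fin N → Fin N → Prop) :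
    0 ≤ frac2 S T p := by
  unfold frac2; positivity

lemma frac2_le_one {N : ℕ} (S T : Finset (Fin N)) (p : Fin N → Fin N → Prop) :
    frac2 S T p ≤ 1 := by
  classical
  unfold frac2
  apply div_le_one_of_le₀ _ (by positivity)
  exact_mod_cast (card_filter_le _ _).trans (card_product S T).le

lemma sub_frac2_mul_le_avg2 {N : ℕ} {S T : Finset (Fin N)} (hS : S.Nonempty) (hT : T.Nonempty)
    (f : Fin N → Fin N → ℝ) {δ m : ℝ} (hm : ∀ j ∈ S, ∀ l ∈ T, m ≤ f j l) :
    δ - frac2 S T (fun j l => f j l ≤ δ) * (δ - m) ≤ avg2 S T f := by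
  classical
  have hST : (0 : ℝ) < #S * #T := by
    have := hS.card_pos; have := hT.card_pos; positivity
  have hsum := card_mul_sub_card_filter_mul_le_sum (S ×ˢ T) (fun q => f q.1 q.2) (δ := δ)
    (fun q hq => hm q.1 (mem_product.1 hq).1 q.2 (mem_product.1 hq).2)
  rw [card_product, Nat.cast_mul, sum_product] at hsum
  unfold avg2 frac2
  rw [le_div_iff₀ hST]
  refine le_of_eq_of_le ?_ hsum
  field_simp

theorem stmt_8_general
    (N d : ℕ)
    (r : ℝ)
    (z : Fin N → EuclideanSpace ℝ (Fin d)) (hz : ∀ i, ‖z i‖ = r)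
    (w : Fin N → Fin N → Bool)
    (i : Fin N) (hT2 : (T2 w i).Nonempty)
    (δT : ℝ) (hδT : δT ∈ Set.Icc (0 : ℝ) (r ^ 2))
    (σ : ℝ) (hσ : σ = frac2 (T2 w i) (T2 w i) (fun j l => ⟪z j, z l⟫ ≤ δT)) :
    avg2 (T2 w i) (T2 w i) (fun j l => ⟪z j, z l⟫) ≥
      δT - Real.sqrt (5 * σ * (r ^ 2 + δT) * r ^ 2) := by
  obtain ⟨hδ0, hδr⟩ := hδT
  have hinner : ∀ j ∈ T2 w i, ∀ l ∈ T2 w i, -r ^ 2 ≤ ⟪z j, z l⟫ := fun j _ l _ => by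
    simpa [hz, sq] using neg_le_of_abs_le (abs_real_inner_le_norm (z j) (z l))
  have havg := sub_frac2_mul_le_avg2 hT2 hT2 _ (δ := δT) hinner
  rw [← hσ] at havg
  have hσ0 : 0 ≤ σ := hσ ▸ frac2_nonneg _ _ _
  have hσ1 : σ ≤ 1 := hσ ▸ frac2_le_one _ _ _
  have ht0 : 0 ≤ σ * (r ^ 2 + δT) := by positivity
  have ht : σ * (r ^ 2 + δT) ≤ 5 * r ^ 2 := by nlinarith
  have hsqrt : σ * (r ^ 2 + δT) ≤ Real.sqrt (5 * σ * (r ^ 2 + δT) * r ^ 2) :=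
    Real.le_sqrt_of_sq_le (by nlinarith)
  linarith

theorem stmt_8
    (N d K : ℕ) (hN : 1 ≤ N) (hd : 1 ≤ d) (hK : 1 ≤ K)
    (r : ℝ) (hr : 0 < r)
    (z : Fin N → EuclideanSpace ℝ (Fin d)) (hz : ∀ i, ‖z i‖ = r)
    (y : Fin N → Fin K)
    (hD : ∀ k, (classSet y k).Nonempty)
    (w : Fin N → Fin N → Bool)
    (hsym : ∀ i j, w i j = w j i)
    (hdiag : ∀ i, w i i = true)
    (hcls : ∀ i j, w i j = true → y i = y j)
    (i : Fin N) (hT2 : (T2 w i).Nonempty)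
    (δT : ℝ) (hδT : δT ∈ Set.Icc (0 : ℝ) (r ^ 2))
    (σ : ℝ) (hσ : σ = frac2 (T2 w i) (T2 w i) (fun j l => ⟪z j, z l⟫ ≤ δT)) :
    avg2 (T2 w i) (T2 w i) (fun j l => ⟪z j, z l⟫) ≥
      δT - Real.sqrt (5 * σ * (r ^ 2 + δT) * r ^ 2) :=
  stmt_8_general N d r z hz w i hT2 δT hδT σ hσ
end
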